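/- For a signed measure H = Q₁ − Q₂ (difference of two probability measures on ℝ^k) and any f, g with ‖f−g‖_{β,ω-span} < ∞, ∫ (f(z)−g(z)) H(dz) ≤ ‖f−g‖_{β,ω-span} · ∫ (1+βω(z)) |H|(dz). (Key step: since H has total mass zero, one may add the centering constant c₀ with sup_z (f−g+c₀)(z)/(1+βω(z)) = −inf_z (f−g+c₀)(z)/(1+βω(z)) = ‖f−g‖_{β,ω-span}.) -/

import Mathlib

open MeasureTheory Set

/-- β-weighted ω-span seminorm. -/
noncomputable def wspanb {k : ℕ} (β : ℝ) (ω f : (Fin k → ℝ) → ℝ) : ℝ :=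
  ⨆ p : (Fin k → ℝ) × (Fin k → ℝ),
    (f p.1 - f p.2) / (2 + β * ω p.1 + β * ω p.2)

/-!
The Jordan decomposition of `Q₁ - Q₂` is `(Q₁ - Q₂, Q₂ - Q₁)` (measure subtraction), and both parts
have the same mass. Hence adding a constant `c` to `φ = f - g` does not change
`∫ φ dQ₁ - ∫ φ dQ₂ = ∫ φ d(Q₁ - Q₂) - ∫ φ d(Q₂ - Q₁)`. With `w = 1 + βω` and `M` the span seminorm,
`φ x - φ y ≤ M (w x + w y)` for all `x, y`, i.e. `sup (φ - M w) ≤ inf (φ + M w)`, so some `c` satisfies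
`|φ + c| ≤ M w`; integrating this against the two parts gives the bound by `M ∫ w d|H|`.
-/

namespace MeasureTheory.Measure

variable {X : Type*} [MeasurableSpace X] {μ ν : Measure X} [IsFiniteMeasure μ] [IsFiniteMeasure ν]

theorem add_sub_eq_add_sub_rev : μ + (ν - μ) = ν + (μ - ν) := by
  have h := sub_eq_sub_iff_add_eq_add.1
    (sub_toSignedMeasure_eq_toSignedMeasure_sub (μ := μ) (ν := ν))
  rw [← toSignedMeasure_eq_toSignedMeasure_iff, toSignedMeasure_add, toSignedMeasure_add, h,
    add_comm]

theorem sub_apply_univ_eq_of_apply_univ_eq (h : μ univ = ν univ) :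
    (μ - ν) univ = (ν - μ) univ := by
  have hmass := congrArg (· univ) (add_sub_eq_add_sub_rev (μ := μ) (ν := ν))
  simp only [add_apply, h] at hmass
  exact ((ENNReal.add_right_inj (measure_ne_top ν univ)).1 hmass).symm

theorem integral_sub_integral_eq_integral_sub_sub {φ : X → ℝ} (hμ : Integrable φ μ)
    (hν : Integrable φ ν) :
    ∫ x, φ x ∂μ - ∫ x, φ x ∂ν = ∫ x, φ x ∂(μ - ν) - ∫ x, φ x ∂(ν - μ) := by
  have h := congrArg (fun ρ => ∫ x, φ x ∂ρ) (add_sub_eq_add_sub_rev (μ := μ) (ν := ν))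
  rw [integral_add_measure hμ (hν.mono_measure sub_le),
    integral_add_measure hν (hμ.mono_measure sub_le)] at h
  linarith

end MeasureTheory.Measure

theorem exists_abs_add_le_mul_of_sub_le {X : Type*} {φ w : X → ℝ} {M : ℝ}
    (h : ∀ x y, φ x - φ y ≤ M * (w x + w y)) : ∃ c, ∀ x, |φ x + c| ≤ M * w x := by
  rcases isEmpty_or_nonempty X with hX | hX
  · exact ⟨0, isEmptyElim⟩
  have hbdd : BddAbove (range fun x => φ x - M * w x) := by
    obtain ⟨y⟩ := hX
    exact ⟨φ y + M * w y, by rintro _ ⟨x, rfl⟩; linarith [h x y]⟩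
  refine ⟨-⨆ x, (φ x - M * w x), fun y => abs_le.2 ⟨?_, ?_⟩⟩
  · have := ciSup_le fun x => (by linarith [h x y] : φ x - M * w x ≤ φ y + M * w y)
    linarith
  · linarith [le_ciSup hbdd y]

theorem integral_sub_integral_le_of_sub_le {X : Type*} [MeasurableSpace X]
    {μ ν : Measure X} [IsFiniteMeasure μ] [IsFiniteMeasure ν] (hmass : μ univ = ν univ)
    {φ w : X → ℝ} {M : ℝ} (hφμ : Integrable φ μ) (hφν : Integrable φ ν)
    (hwμ : Integrable w μ) (hwν : Integrable w ν) (h : ∀ x y, φ x - φ y ≤ M * (w x + w y)) :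
    ∫ x, φ x ∂μ - ∫ x, φ x ∂ν ≤ M * ∫ x, w x ∂(μ + ν) := by
  obtain ⟨c, hc⟩ := exists_abs_add_le_mul_of_sub_le h
  have hμ : ∫ x, (φ x + c) ∂μ ≤ ∫ x, M * w x ∂μ :=
    integral_mono (hφμ.add (integrable_const c)) (hwμ.const_mul M)
      fun x => (le_abs_self _).trans (hc x)
  have hν : ∫ x, -(φ x + c) ∂ν ≤ ∫ x, M * w x ∂ν :=
    integral_mono (hφν.add (integrable_const c)).neg (hwν.const_mul M)
      fun x => (neg_le_abs _).trans (hc x)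
  have hmass' : μ.real univ = ν.real univ := by simp only [measureReal_def, hmass]
  rw [integral_add hφμ (integrable_const c), integral_const, integral_const_mul] at hμ
  rw [integral_neg, integral_add hφν (integrable_const c), integral_const,
    integral_const_mul] at hν
  rw [integral_add_measure hwμ hwν]
  simp only [smul_eq_mul, hmass'] at hμ hν
  linarith

theorem sub_le_wspanb_mul {k : ℕ} {β : ℝ} {ω f : (Fin k → ℝ) → ℝ} (hβ : 0 ≤ β)
    (hω : ∀ x, 0 ≤ ω x)
    (hf : BddAbove (range fun p : (Fin k → ℝ) × (Fin k → ℝ) =>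
      (f p.1 - f p.2) / (2 + β * ω p.1 + β * ω p.2))) (x y : Fin k → ℝ) :
    f x - f y ≤ wspanb β ω f * ((1 + β * ω x) + (1 + β * ω y)) := by
  have hpos : 0 < 2 + β * ω x + β * ω y := by
    nlinarith [mul_nonneg hβ (hω x), mul_nonneg hβ (hω y)]
  have := (div_le_iff₀ hpos).1 (le_ciSup hf (x, y))
  rw [wspanb]
  linarith

theorem stmt16_general (k : ℕ) (ω : (Fin k → ℝ) → ℝ)
    (hω0 : ∀ x, 0 ≤ ω x) (β : ℝ) (hβ : 0 < β)
    (Q₁ Q₂ : Measure (Fin k → ℝ))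
    [IsProbabilityMeasure Q₁] [IsProbabilityMeasure Q₂]
    (f g : (Fin k → ℝ) → ℝ)
    (hspan : BddAbove (Set.range fun p : (Fin k → ℝ) × (Fin k → ℝ) =>
      ((f p.1 - g p.1) - (f p.2 - g p.2)) / (2 + β * ω p.1 + β * ω p.2)))
    (hI₁ : Integrable (fun z => f z - g z) Q₁)
    (hI₂ : Integrable (fun z => f z - g z) Q₂)
    (hIvar : Integrable (fun z => 1 + β * ω z)
      ((Q₁.toSignedMeasure - Q₂.toSignedMeasure).totalVariation)) :
    (∫ z, (f z - g z) ∂Q₁) - (∫ z, (f z - g z) ∂Q₂) ≤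
      wspanb β ω (fun z => f z - g z) *
        ∫ z, (1 + β * ω z)
          ∂((Q₁.toSignedMeasure - Q₂.toSignedMeasure).totalVariation) := by
  have hTV : (Q₁.toSignedMeasure - Q₂.toSignedMeasure).totalVariation =
      (Q₁ - Q₂) + (Q₂ - Q₁) := by
    simp [SignedMeasure.totalVariation, Measure.jordanDecompositionOfToSignedMeasureSub]
  rw [hTV] at hIvar ⊢
  rw [Measure.integral_sub_integral_eq_integral_sub_sub hI₁ hI₂]
  exact integral_sub_integral_le_of_sub_le
    (Measure.sub_apply_univ_eq_of_apply_univ_eq (by simp))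
    (hI₁.mono_measure Measure.sub_le) (hI₂.mono_measure Measure.sub_le)
    (hIvar.mono_measure (Measure.le_add_right le_rfl))
    (hIvar.mono_measure (Measure.le_add_left le_rfl))
    (sub_le_wspanb_mul hβ.le hω0 hspan)

theorem stmt16 (k : ℕ) (ω : (Fin k → ℝ) → ℝ) (hωc : Continuous ω)
    (hω0 : ∀ x, 0 ≤ ω x) (β : ℝ) (hβ : 0 < β)
    (Q₁ Q₂ : Measure (Fin k → ℝ))
    [IsProbabilityMeasure Q₁] [IsProbabilityMeasure Q₂]
    (f g : (Fin k → ℝ) → ℝ)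
    (hspan : BddAbove (Set.range fun p : (Fin k → ℝ) × (Fin k → ℝ) =>
      ((f p.1 - g p.1) - (f p.2 - g p.2)) / (2 + β * ω p.1 + β * ω p.2)))
    (hI₁ : Integrable (fun z => f z - g z) Q₁)
    (hI₂ : Integrable (fun z => f z - g z) Q₂)
    (hIvar : Integrable (fun z => 1 + β * ω z)
      ((Q₁.toSignedMeasure - Q₂.toSignedMeasure).totalVariation)) :
    (∫ z, (f z - g z) ∂Q₁) - (∫ z, (f z - g z) ∂Q₂) ≤
      wspanb β ω (fun z => f z - g z) *
        ∫ z, (1 + β * ω z)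
          ∂((Q₁.toSignedMeasure - Q₂.toSignedMeasure).totalVariation) :=
  stmt16_general k ω hω0 β hβ Q₁ Q₂ f g hspan hI₁ hI₂ hIvar
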